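/- The poset P₁ = (ℕ^ℕ × ℕ) ∪ B ∪ {⊤₁} described in the context is a dcpo; moreover, every directed subset of P₁ without a greatest element is of the form {(f₀, n) : n ∈ N} for a fixed f₀ ∈ ℕ^ℕ and an infinite N ⊆ ℕ, or is a directed subset cofinally contained in B. -/

import Mathlib

/-- A subset `D` is directed with respect to the relation `le`:
it is nonempty and any two elements have an upper bound in `D`. -/
def DirectedOn' {α : Type*} (le : α → α → Prop) (D : Set α) : Prop :=
  D.Nonempty ∧ ∀ x ∈ D, ∀ y ∈ D, ∃ z ∈ D, le x z ∧ le y z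

/-- `u` is a least upper bound of `D` with respect to the relation `le`. -/
def IsLub' {α : Type*} (le : α → α → Prop) (D : Set α) (u : α) : Prop :=
  (∀ x ∈ D, le x u) ∧ ∀ v, (∀ x ∈ D, le x v) → le u v

/-- Every directed subset has a least upper bound: `le` makes the carrier a dcpo. -/
def IsDcpoRel {α : Type*} (le : α → α → Prop) : Prop :=
  ∀ D : Set α, DirectedOn' le D → ∃ u, IsLub' le D u

/-- `U` is Scott open with respect to `le`: it is an upper set and every directed subset
whose least upper bound lies in `U` meets `U`. -/
def ScottOpen' {α : Type*} (le : α → α → Prop) (U : Set α) : Prop :=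
  (∀ x y, le x y → x ∈ U → y ∈ U) ∧
    ∀ D u, DirectedOn' le D → IsLub' le D u → u ∈ U → (D ∩ U).Nonempty

/-- `A` is Scott closed with respect to `le`: it is a lower set and contains the least upper
bounds of its directed subsets. -/
def ScottClosed' {α : Type*} (le : α → α → Prop) (A : Set α) : Prop :=
  (∀ x y, le x y → y ∈ A → x ∈ A) ∧
    ∀ D u, D ⊆ A → DirectedOn' le D → IsLub' le D u → u ∈ A

/-- Sobriety of the Scott space of `le`: the space is T₀ and every irreducible Scott closed
subset is the Scott closure `↓x = {y | le y x}` of a unique point `x`. -/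
def SoberRel {α : Type*} (le : α → α → Prop) : Prop :=
  (∀ x y : α, (∀ U : Set α, ScottOpen' le U → (x ∈ U ↔ y ∈ U)) → x = y) ∧
    ∀ C : Set α, ScottClosed' le C → C.Nonempty →
      (∀ A B : Set α, ScottClosed' le A → ScottClosed' le B → C ⊆ A ∪ B → C ⊆ A ∨ C ⊆ B) →
      ∃! x : α, C = {y | le y x}

/-! ### The posets `M`, `L`, `B`, `P₁`, `P₂` of Miao, Xi, Jia, Li, Zhao -/

/-- `ℕ^{<ℕ}`: nonempty finite words over `ℕ`. -/
abbrev NWord : Type := {l : List ℕ // l ≠ []}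

/-- The prefix order on nonempty finite words. -/
def wordLE (v w : NWord) : Prop := v.1 <+: w.1

/-- The word of length 1 corresponding to a natural number. -/
def word1 (k : ℕ) : NWord := ⟨[k], by simp⟩

/-- `s.k`: the word `s` extended by the letter `k`. -/
def wordSnoc (s : NWord) (k : ℕ) : NWord := ⟨s.1 ++ [k], by simp⟩

/-- The poset `M = ℕ ⊔ ℕ^{<ℕ}`, the disjoint sum of `ℕ` and the words. -/
abbrev Mt : Type := ℕ ⊕ NWord

/-- The (disjoint sum) order on `M`. -/
def Mle : Mt → Mt → Prop
  | Sum.inl a, Sum.inl b => a ≤ b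
  | Sum.inr v, Sum.inr w => wordLE v w
  | _, _ => False

/-- The strict order on `M`. -/
def Mlt (x y : Mt) : Prop := Mle x y ∧ x ≠ y

/-- Pairs `(a, b)` of naturals with `a < b`. -/
abbrev Pairt : Type := {p : ℕ × ℕ // p.1 < p.2}

/-- The poset `L = ({(a,b) : a < b} × M) ∪ {⊤}`; `none` is the top element `⊤` and
`some (p, x)` is the element `x_{a,b}` for `p = (a,b)`. -/
abbrev Lt : Type := Option (Pairt × Mt)

/-- The strict order on `L`: everything (other than `⊤`) is strictly below `⊤ = none`, and
`x_{a,b} < y_{a,b}` iff `x < y` in `M` (with the same tag `(a,b)`). -/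
def Llt (u v : Lt) : Prop :=
  (u ≠ none ∧ v = none) ∨ ∃ p x y, u = some (p, x) ∧ v = some (p, y) ∧ Mlt x y

/-- The carrier of the poset `B = ℕ × ℕ × L`. -/
abbrev Bt : Type := ℕ × ℕ × Lt

/-- `⊏₁`: `(m, n, ℓ) ⊏₁ (m, n, ℓ')` whenever `ℓ < ℓ'` in `L`. -/
def sq1 : Bt → Bt → Prop := fun x y =>
  ∃ m n u v, x = (m, n, u) ∧ y = (m, n, v) ∧ Llt u v

/-- `⊏₂`: `(a, n, x_{a,b}) ⊏₂ (f_{a,b}(x), n+1, ⊤)` for a word `x ∈ ℕ^{<ℕ}`. -/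
def sq2 (f : Pairt → NWord → ℕ) : Bt → Bt → Prop := fun x y =>
  ∃ (n : ℕ) (p : Pairt) (w : NWord),
    x = (p.1.1, n, some (p, Sum.inr w)) ∧ y = (f p w, n + 1, (none : Lt))

/-- `⊏₃`: `(b, n, x_{a,b}) ⊏₃ (f_{a,b}(x), n+1, ⊤)` for `x ∈ ℕ`, regarded as a word of
length 1. -/
def sq3 (f : Pairt → NWord → ℕ) : Bt → Bt → Prop := fun x y =>
  ∃ (n k : ℕ) (p : Pairt),
    x = (p.1.2, n, some (p, Sum.inl k)) ∧ y = (f p (word1 k), n + 1, (none : Lt))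

/-- `⊏₄`: `(f_{a,b}(s), n, x_{a,b}) ⊏₄ (f_{a,b}(s.x), n, ⊤)` for a word `s` and `x ∈ ℕ`. -/
def sq4 (f : Pairt → NWord → ℕ) : Bt → Bt → Prop := fun x y =>
  ∃ (n k : ℕ) (p : Pairt) (s : NWord),
    x = (f p s, n, some (p, Sum.inl k)) ∧ y = (f p (wordSnoc s k), n, (none : Lt))

/-- `⊏ = ⊏₁ ∪ ⊏₂ ∪ ⊏₃ ∪ ⊏₄ ∪ ⊏₁;⊏₂ ∪ ⊏₁;⊏₃ ∪ ⊏₁;⊏₄`. -/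
def Bsq (f : Pairt → NWord → ℕ) : Bt → Bt → Prop := fun x y =>
  sq1 x y ∨ sq2 f x y ∨ sq3 f x y ∨ sq4 f x y ∨
    (∃ z, sq1 x z ∧ sq2 f z y) ∨ (∃ z, sq1 x z ∧ sq3 f z y) ∨ (∃ z, sq1 x z ∧ sq4 f z y)

/-- The order `⊑` on `B`: the reflexive closure of `⊏`. -/
def Ble (f : Pairt → NWord → ℕ) (x y : Bt) : Prop := x = y ∨ Bsq f x y

/-- The hypotheses on the data `i`, `f`: `i` is an injection into `P(ℕ)` with pairwise
disjoint values satisfying `n < k` for all `k ∈ i (m, n)`, and each `f_{a,b}` is a monotone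
injection of `ℕ^{<ℕ}` (with the prefix order) into `i (a, b)`. -/
structure IFData (i : Pairt → Set ℕ) (f : Pairt → NWord → ℕ) : Prop where
  inj : Function.Injective i
  disj : ∀ p q : Pairt, p ≠ q → i p ∩ i q = ∅
  gt : ∀ p : Pairt, ∀ k ∈ i p, p.1.2 < k
  mem : ∀ p w, f p w ∈ i p
  finj : ∀ p, Function.Injective (f p)
  fmono : ∀ p v w, wordLE v w → f p v ≤ f p w

/-- The carrier of the poset `P₁ = (ℕ^ℕ × ℕ) ∪ B ∪ {⊤₁}`. -/
abbrev P1t : Type := ((ℕ → ℕ) × ℕ) ⊕ Bt ⊕ Unit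

/-- The top element `⊤₁` of `P₁`. -/
def P1top : P1t := Sum.inr (Sum.inr ())

/-- The inclusion of `B` into `P₁`. -/
def P1ofB (b : Bt) : P1t := Sum.inr (Sum.inl b)

/-- The strict order `<₁ ∪ <₂ ∪ <₃ ∪ <₄ ∪ <₁;<₃` of `P₁`:
`(g, n) <₁ (g, m)` iff `n < m`; `<₂` is `⊏` on `B`; `(g, n) <₃ (g(n), n, ⊤)`;
`x <₄ ⊤₁` for `x ≠ ⊤₁`; and `(g, n) <₁;<₃ (g(m), m, ⊤)` for `n < m`. -/
def P1lt (f : Pairt → NWord → ℕ) : P1t → P1t → Prop := fun x y =>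
  (∃ (g : ℕ → ℕ) (n m : ℕ), x = Sum.inl (g, n) ∧ y = Sum.inl (g, m) ∧ n < m) ∨
  (∃ b c : Bt, x = P1ofB b ∧ y = P1ofB c ∧ Bsq f b c) ∨
  (∃ (g : ℕ → ℕ) (n : ℕ), x = Sum.inl (g, n) ∧ y = P1ofB (g n, n, (none : Lt))) ∨
  (x ≠ P1top ∧ y = P1top) ∨
  (∃ (g : ℕ → ℕ) (n m : ℕ), x = Sum.inl (g, n) ∧ n < m ∧ y = P1ofB (g m, m, (none : Lt)))

/-- The order of `P₁`: the reflexive closure of the strict order. -/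
def P1le (f : Pairt → NWord → ℕ) (x y : P1t) : Prop := x = y ∨ P1lt f x y

/-!
The strict order of `P₁` is irreflexive and transitive. In `B` this is because a jump
`⊏₂, ⊏₃, ⊏₄` starts below a top element `(m, n, ⊤)` and lands on one, so every composite of
steps collapses to a `⊏₁`-step followed by at most one jump.

Let `D` be directed without greatest element. If some `(g, n₀) ∈ D` has no element of `B`
above it in `D`, then `D` is an infinite part of the chain `(g, n)`, whose only upper bound is
`⊤₁`. Otherwise `D` is cofinal in `B`, and its part in `B` lies in a single copy
`{(m, n)} × L` with unbounded ranks (the value of a natural, the length of a word). An upper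
bound `(m', n', ⊤)` in another copy would be reached by jumps landing on `f p w` for words `w`
that bound the ranks; injectivity of `f p` makes `w` unique, a contradiction. So `(m, n, ⊤)` is
the unique upper bound in `B`, hence the supremum of `D`.
-/

def Mrank : Mt → ℕ
  | Sum.inl k => k
  | Sum.inr w => w.1.length

lemma Mle_refl (x : Mt) : Mle x x := by
  rcases x with k | w
  exacts [le_refl k, List.prefix_refl w.1]

lemma Mle_trans : ∀ {x y z : Mt}, Mle x y → Mle y z → Mle x z
  | Sum.inl _, Sum.inl _, Sum.inl _, hxy, hyz => Nat.le_trans hxy hyz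
  | Sum.inr _, Sum.inr _, Sum.inr _, hxy, hyz => List.IsPrefix.trans hxy hyz
  | Sum.inl _, Sum.inr _, _, hxy, _ | Sum.inr _, Sum.inl _, _, hxy, _ => hxy.elim
  | Sum.inl _, Sum.inl _, Sum.inr _, _, hyz | Sum.inr _, Sum.inr _, Sum.inl _, _, hyz => hyz.elim

lemma Mle.rank_le : ∀ {x y : Mt}, Mle x y → Mrank x ≤ Mrank y
  | Sum.inl _, Sum.inl _, h => h
  | Sum.inr _, Sum.inr _, h => List.IsPrefix.length_le h
  | Sum.inl _, Sum.inr _, h | Sum.inr _, Sum.inl _, h => h.elim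

lemma Mle.eq_of_rank_le : ∀ {x y : Mt}, Mle x y → Mrank y ≤ Mrank x → x = y
  | Sum.inl _, Sum.inl _, h, h' => congrArg Sum.inl (le_antisymm h h')
  | Sum.inr _, Sum.inr _, h, h' =>
      congrArg Sum.inr (Subtype.ext (List.IsPrefix.eq_of_length_le h h'))
  | Sum.inl _, Sum.inr _, h, _ | Sum.inr _, Sum.inl _, h, _ => h.elim

lemma Mlt.rank_lt {x y : Mt} (h : Mlt x y) : Mrank x < Mrank y :=
  lt_of_le_of_ne h.1.rank_le fun he => h.2 (h.1.eq_of_rank_le he.ge)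

lemma Mlt_trans {x y z : Mt} (hxy : Mlt x y) (hyz : Mlt y z) : Mlt x z :=
  ⟨Mle_trans hxy.1 hyz.1, fun he => (hxy.rank_lt.trans hyz.rank_lt).ne (congrArg Mrank he)⟩

lemma exists_greatest_of_directedOn_of_rank_le {X : Set Mt} (hX : DirectedOn' Mle X) {K : ℕ}
    (hK : ∀ x ∈ X, Mrank x ≤ K) : ∃ g ∈ X, ∀ x ∈ X, Mle x g := by
  obtain ⟨r, ⟨g, hg, rfl⟩, hgreatest⟩ :=
    BddAbove.exists_isGreatest_of_nonempty (S := Mrank '' X)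
      ⟨K, Set.forall_mem_image.2 hK⟩ (hX.1.image _)
  refine ⟨g, hg, fun x hx => ?_⟩
  obtain ⟨z, hz, hxz, hgz⟩ := hX.2 x hx g hg
  rwa [← hgz.eq_of_rank_le (hgreatest ⟨z, hz, rfl⟩)] at hxz

@[simp] lemma not_Llt_none_left (v : Lt) : ¬ Llt none v := by
  rintro (⟨h, -⟩ | ⟨p, x, y, h, -⟩) <;> simp at h

@[simp] lemma Llt_none_right (u : Lt) : Llt u none ↔ u ≠ none := by
  simp [Llt]

@[simp] lemma Llt_some_some {p q : Pairt} {x y : Mt} :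
    Llt (some (p, x)) (some (q, y)) ↔ p = q ∧ Mlt x y := by
  constructor
  · rintro (⟨-, h⟩ | ⟨p', x', y', h₁, h₂, h⟩)
    · simp at h
    · simp only [Option.some.injEq, Prod.mk.injEq] at h₁ h₂
      obtain ⟨⟨rfl, rfl⟩, rfl, rfl⟩ := And.intro h₁ h₂
      exact ⟨rfl, h⟩
  · rintro ⟨rfl, h⟩
    exact .inr ⟨p, x, y, rfl, rfl, h⟩

lemma Llt_trans {u v w : Lt} (huv : Llt u v) (hvw : Llt v w) : Llt u w := by
  rcases u with _ | ⟨p, x⟩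
  · simp at huv
  rcases w with _ | ⟨r, z⟩
  · simp
  rcases v with _ | ⟨q, y⟩
  · simp at hvw
  simp only [Llt_some_some] at huv hvw ⊢
  exact ⟨huv.1.trans hvw.1, Mlt_trans huv.2 hvw.2⟩

lemma Llt_irrefl (u : Lt) : ¬ Llt u u := by
  rcases u with _ | ⟨p, x⟩ <;> simp [Mlt]

@[simp] lemma sq1_iff {m n m' n' : ℕ} {u v : Lt} :
    sq1 (m, n, u) (m', n', v) ↔ m = m' ∧ n = n' ∧ Llt u v := by
  simp only [sq1, Prod.mk.injEq]
  constructor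
  · rintro ⟨_, _, _, _, ⟨rfl, rfl, rfl⟩, ⟨rfl, rfl, rfl⟩, h⟩
    exact ⟨rfl, rfl, h⟩
  · rintro ⟨rfl, rfl, h⟩
    exact ⟨_, _, _, _, ⟨rfl, rfl, rfl⟩, ⟨rfl, rfl, rfl⟩, h⟩

lemma sq1_trans {x y z : Bt} (hxy : sq1 x y) (hyz : sq1 y z) : sq1 x z := by
  obtain ⟨_, _, _⟩ := x; obtain ⟨_, _, _⟩ := y; obtain ⟨_, _, _⟩ := z
  simp only [sq1_iff] at *
  exact ⟨hxy.1.trans hyz.1, hxy.2.1.trans hyz.2.1, Llt_trans hxy.2.2 hyz.2.2⟩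

section B

variable {f : Pairt → NWord → ℕ}

def sqJump (f : Pairt → NWord → ℕ) (x y : Bt) : Prop := sq2 f x y ∨ sq3 f x y ∨ sq4 f x y

lemma Bsq_iff {x y : Bt} :
    Bsq f x y ↔ sq1 x y ∨ ∃ z, (x = z ∨ sq1 x z) ∧ sqJump f z y := by
  simp only [Bsq, sqJump]
  constructor
  · rintro (h | h | h | h | ⟨z, hz, h⟩ | ⟨z, hz, h⟩ | ⟨z, hz, h⟩)
    exacts [.inl h, .inr ⟨x, .inl rfl, .inl h⟩, .inr ⟨x, .inl rfl, .inr (.inl h)⟩,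
      .inr ⟨x, .inl rfl, .inr (.inr h)⟩, .inr ⟨z, .inr hz, .inl h⟩,
      .inr ⟨z, .inr hz, .inr (.inl h)⟩, .inr ⟨z, .inr hz, .inr (.inr h)⟩]
  · rintro (h | ⟨z, rfl | hz, h | h | h⟩)
    exacts [.inl h, .inr (.inl h), .inr (.inr (.inl h)), .inr (.inr (.inr (.inl h))),
      .inr (.inr (.inr (.inr (.inl ⟨z, hz, h⟩)))),
      .inr (.inr (.inr (.inr (.inr (.inl ⟨z, hz, h⟩))))),
      .inr (.inr (.inr (.inr (.inr (.inr ⟨z, hz, h⟩)))))]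

lemma sqJump.src_ne_none {x y : Bt} (h : sqJump f x y) : x.2.2 ≠ none := by
  rcases h with ⟨_, _, _, rfl, -⟩ | ⟨_, _, _, rfl, -⟩ | ⟨_, _, _, _, rfl, -⟩ <;> simp

lemma sqJump.tgt_eq_none {x y : Bt} (h : sqJump f x y) : y.2.2 = none := by
  rcases h with ⟨_, _, _, -, rfl⟩ | ⟨_, _, _, -, rfl⟩ | ⟨_, _, _, _, -, rfl⟩ <;> rfl

lemma sqJump.rank_le {m n m' n' : ℕ} {p : Pairt} {x : Mt} {v : Lt}
    (h : sqJump f (m, n, some (p, x)) (m', n', v)) :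
    ∃ w : NWord, m' = f p w ∧ Mrank x ≤ w.1.length + w.1.sum := by
  rcases h with ⟨_, q, w, hx, hy⟩ | ⟨_, k, q, hx, hy⟩ | ⟨_, k, q, s, hx, hy⟩ <;>
    simp only [Prod.mk.injEq, Option.some.injEq] at hx hy <;>
    obtain ⟨-, -, rfl, rfl⟩ := hx
  · exact ⟨w, hy.1, Nat.le_add_right _ _⟩
  · exact ⟨word1 k, hy.1, by simp [Mrank, word1]⟩
  · refine ⟨wordSnoc s k, hy.1, le_add_left (List.le_sum_of_mem ?_)⟩
    simp [wordSnoc, Mrank]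

lemma sq1.src_ne_none {x y : Bt} (h : sq1 x y) : x.2.2 ≠ none := by
  obtain ⟨m, n, u⟩ := x
  obtain ⟨m', n', v⟩ := y
  rintro rfl
  exact not_Llt_none_left v (sq1_iff.1 h).2.2

lemma Bsq.src_ne_none {x y : Bt} (h : Bsq f x y) : x.2.2 ≠ none := by
  rcases Bsq_iff.1 h with h | ⟨z, rfl | h, hj⟩
  exacts [h.src_ne_none, hj.src_ne_none, h.src_ne_none]

lemma Bsq.sq1_of_tgt_ne_none {x y : Bt} (h : Bsq f x y) (hy : y.2.2 ≠ none) : sq1 x y := by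
  rcases Bsq_iff.1 h with h | ⟨z, -, hj⟩
  exacts [h, absurd hj.tgt_eq_none hy]

lemma Bsq_trans {x y z : Bt} (hxy : Bsq f x y) (hyz : Bsq f y z) : Bsq f x z := by
  have hxy : sq1 x y := hxy.sq1_of_tgt_ne_none hyz.src_ne_none
  rcases Bsq_iff.1 hyz with hyz | ⟨w, hyw, hj⟩
  · exact Bsq_iff.2 (.inl (sq1_trans hxy hyz))
  · refine Bsq_iff.2 (.inr ⟨w, .inr ?_, hj⟩)
    rcases hyw with rfl | hyw
    exacts [hxy, sq1_trans hxy hyw]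

lemma Bsq_irrefl (x : Bt) : ¬ Bsq f x x := by
  intro h
  obtain ⟨m, n, u⟩ := x
  exact Llt_irrefl u (sq1_iff.1 (h.sq1_of_tgt_ne_none h.src_ne_none)).2.2

lemma Ble_some_top (m n : ℕ) (p : Pairt) (x : Mt) :
    Ble f (m, n, some (p, x)) (m, n, none) :=
  .inr (Bsq_iff.2 (.inl (by simp)))

lemma Ble.eq_of_top_left {m n : ℕ} {y : Bt} (h : Ble f (m, n, none) y) : y = (m, n, none) :=
  h.elim Eq.symm fun h => absurd rfl h.src_ne_none

lemma Ble.exists_of_some_right {x : Bt} {m n : ℕ} {p : Pairt} {w : Mt}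
    (h : Ble f x (m, n, some (p, w))) : ∃ v, x = (m, n, some (p, v)) ∧ Mle v w := by
  rcases h with rfl | h
  · exact ⟨w, rfl, Mle_refl w⟩
  obtain ⟨m', n', u⟩ := x
  have h1 := h.sq1_of_tgt_ne_none (by simp)
  obtain ⟨rfl, rfl, hu⟩ := sq1_iff.1 h1
  rcases u with _ | ⟨q, v⟩
  · simp at hu
  obtain ⟨rfl, hv⟩ := Llt_some_some.1 hu
  exact ⟨v, rfl, hv.1⟩

lemma Bsq.rank_le_of_ne {m n m' n' : ℕ} {p : Pairt} {x : Mt}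
    (h : Bsq f (m, n, some (p, x)) (m', n', none)) (hne : (m', n') ≠ (m, n)) :
    ∃ w : NWord, m' = f p w ∧ Mrank x ≤ w.1.length + w.1.sum := by
  rcases Bsq_iff.1 h with h | ⟨z, hz, hj⟩
  · obtain ⟨rfl, rfl, -⟩ := sq1_iff.1 h
    exact absurd rfl hne
  obtain ⟨v, rfl, hxv⟩ : ∃ v, z = (m, n, some (p, v)) ∧ Mle x v := by
    rcases hz with rfl | hz
    · exact ⟨x, rfl, Mle_refl x⟩
    obtain ⟨m₁, n₁, _ | ⟨q, v⟩⟩ := z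
    · exact absurd rfl hj.src_ne_none
    obtain ⟨rfl, rfl, rfl, hv⟩ := by simpa only [sq1_iff, Llt_some_some] using hz
    exact ⟨v, rfl, hv.1⟩
  obtain ⟨w, hw, hv⟩ := hj.rank_le
  exact ⟨w, hw, hxv.rank_le.trans hv⟩

lemma Ble_of_Mle {m n : ℕ} {p : Pairt} {x y : Mt} (h : Mle x y) :
    Ble f (m, n, some (p, x)) (m, n, some (p, y)) := by
  by_cases hxy : x = y
  · exact .inl (by rw [hxy])
  · exact .inr (Bsq_iff.2 (.inl (sq1_iff.2 ⟨rfl, rfl, Llt_some_some.2 ⟨rfl, h, hxy⟩⟩)))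

lemma eq_top_of_forall_Ble (hf : ∀ p, Function.Injective (f p)) {m n : ℕ} {p : Pairt}
    {X : Set Mt} (hX : ∀ K, ∃ x ∈ X, K < Mrank x) {z : Bt}
    (hz : ∀ x ∈ X, Ble f (m, n, some (p, x)) z) : z = (m, n, none) := by
  obtain ⟨m', n', _ | ⟨q, y⟩⟩ := z
  · by_contra hne
    have hne' : (m', n') ≠ (m, n) := by rintro ⟨⟩; exact hne rfl
    have hjump : ∀ x ∈ X, ∃ w : NWord, m' = f p w ∧ Mrank x ≤ w.1.length + w.1.sum :=
      fun x hx => ((hz x hx).resolve_left (by simp)).rank_le_of_ne hne'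
    obtain ⟨x₀, hx₀, -⟩ := hX 0
    obtain ⟨w₀, hw₀, -⟩ := hjump x₀ hx₀
    obtain ⟨x, hx, hbig⟩ := hX (w₀.1.length + w₀.1.sum)
    obtain ⟨w, hw, hsmall⟩ := hjump x hx
    rw [hf p (hw.symm.trans hw₀)] at hsmall
    omega
  · exfalso
    obtain ⟨x, hx, hbig⟩ := hX (Mrank y)
    obtain ⟨v, hv, hle⟩ := (hz x hx).exists_of_some_right
    obtain ⟨rfl, rfl, rfl, rfl⟩ : m = m' ∧ n = n' ∧ p = q ∧ x = v := by simpa using hv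
    exact absurd hle.rank_le hbig.not_ge

variable {D : Set Bt}

lemma exists_fiber_of_directedOn (hD : DirectedOn' (Ble f) D)
    (hng : ¬ ∃ g ∈ D, ∀ e ∈ D, Ble f e g) :
    ∃ m n p, ∀ e ∈ D, ∃ x, e = (m, n, some (p, x)) := by
  have hsome : ∀ c ∈ D, c.2.2 ≠ none := by
    rintro ⟨m, n, u⟩ hc (rfl : u = none)
    refine hng ⟨_, hc, fun e he => ?_⟩
    obtain ⟨c', hc', hcc', hec'⟩ := hD.2 _ hc e he
    rwa [hcc'.eq_of_top_left] at hec'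
  obtain ⟨e₀, he₀⟩ := hD.1
  obtain ⟨m, n, _ | ⟨p, x₀⟩⟩ := e₀
  · exact absurd rfl (hsome _ he₀)
  refine ⟨m, n, p, fun e he => ?_⟩
  obtain ⟨c, hc, hec, he₀c⟩ := hD.2 e he _ he₀
  obtain ⟨mc, nc, _ | ⟨q, w⟩⟩ := c
  · exact absurd rfl (hsome _ hc)
  obtain ⟨v₀, hv₀, -⟩ := he₀c.exists_of_some_right
  obtain ⟨rfl, rfl, rfl, -⟩ : m = mc ∧ n = nc ∧ p = q ∧ x₀ = v₀ := by simpa using hv₀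
  obtain ⟨v, rfl, -⟩ := hec.exists_of_some_right
  exact ⟨v, rfl⟩

lemma rank_unbounded_of_directedOn (hD : DirectedOn' (Ble f) D)
    (hng : ¬ ∃ g ∈ D, ∀ e ∈ D, Ble f e g) {m n : ℕ} {p : Pairt}
    (hfib : ∀ e ∈ D, ∃ x, e = (m, n, some (p, x))) (K : ℕ) :
    ∃ x ∈ {x | (m, n, some (p, x)) ∈ D}, K < Mrank x := by
  by_contra! hK
  have hX : DirectedOn' Mle {x | (m, n, some (p, x)) ∈ D} := by
    refine ⟨?_, fun x hx y hy => ?_⟩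
    · obtain ⟨e, he⟩ := hD.1
      obtain ⟨x, rfl⟩ := hfib e he
      exact ⟨x, he⟩
    obtain ⟨c, hc, hxc, hyc⟩ := hD.2 _ hx _ hy
    obtain ⟨z, rfl⟩ := hfib c hc
    obtain ⟨x', hx', hxz⟩ := hxc.exists_of_some_right
    obtain ⟨y', hy', hyz⟩ := hyc.exists_of_some_right
    obtain ⟨rfl⟩ : x = x' := by simpa using hx'
    obtain ⟨rfl⟩ : y = y' := by simpa using hy'
    exact ⟨z, hc, hxz, hyz⟩
  obtain ⟨g, hg, hgreatest⟩ := exists_greatest_of_directedOn_of_rank_le hX hK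
  refine hng ⟨_, hg, fun e he => ?_⟩
  obtain ⟨x, rfl⟩ := hfib e he
  exact Ble_of_Mle (hgreatest x he)

lemma exists_upperBounds_eq_singleton (hf : ∀ p, Function.Injective (f p))
    (hD : DirectedOn' (Ble f) D) (hng : ¬ ∃ g ∈ D, ∀ e ∈ D, Ble f e g) :
    ∃ s, ∀ z, (∀ e ∈ D, Ble f e z) ↔ z = s := by
  obtain ⟨m, n, p, hfib⟩ := exists_fiber_of_directedOn hD hng
  refine ⟨(m, n, none), fun z => ⟨fun hz => ?_, ?_⟩⟩
  · exact eq_top_of_forall_Ble hf (rank_unbounded_of_directedOn hD hng hfib) fun x hx => hz _ hx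
  · rintro rfl e he
    obtain ⟨x, rfl⟩ := hfib e he
    exact Ble_some_top m n p x

end B

section P1

variable {f : Pairt → NWord → ℕ}

lemma P1t_cases (x : P1t) : (∃ g n, x = Sum.inl (g, n)) ∨ (∃ b, x = P1ofB b) ∨ x = P1top := by
  rcases x with ⟨g, n⟩ | b | ⟨⟩
  exacts [.inl ⟨g, n, rfl⟩, .inr (.inl ⟨b, rfl⟩), .inr (.inr rfl)]

@[simp] lemma P1ofB_inj {b c : Bt} : P1ofB b = P1ofB c ↔ b = c := by simp [P1ofB]
@[simp] lemma P1ofB_ne_top (b : Bt) : P1ofB b ≠ P1top := by simp [P1ofB, P1top]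
@[simp] lemma inl_ne_top (q : (ℕ → ℕ) × ℕ) : (Sum.inl q : P1t) ≠ P1top := by simp [P1top]
@[simp] lemma top_ne_P1ofB (b : Bt) : P1top ≠ P1ofB b := (P1ofB_ne_top b).symm
@[simp] lemma top_ne_inl (q : (ℕ → ℕ) × ℕ) : P1top ≠ (Sum.inl q : P1t) := (inl_ne_top q).symm
@[simp] lemma inl_ne_P1ofB (q : (ℕ → ℕ) × ℕ) (b : Bt) : (Sum.inl q : P1t) ≠ P1ofB b := by
  simp [P1ofB]
@[simp] lemma P1ofB_ne_inl (q : (ℕ → ℕ) × ℕ) (b : Bt) : P1ofB b ≠ Sum.inl q := by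
  simp [P1ofB]

@[simp] lemma P1lt_inl_inl {g g' : ℕ → ℕ} {n m : ℕ} :
    P1lt f (Sum.inl (g, n)) (Sum.inl (g', m)) ↔ g = g' ∧ n < m := by
  simp [P1lt, eq_comm]

@[simp] lemma P1lt_inl_P1ofB {g : ℕ → ℕ} {n : ℕ} {b : Bt} :
    P1lt f (Sum.inl (g, n)) (P1ofB b) ↔ ∃ m, n ≤ m ∧ b = (g m, m, none) := by
  simp [P1lt, le_iff_eq_or_lt, or_and_right, exists_or]

@[simp] lemma P1lt_P1ofB_P1ofB {b c : Bt} : P1lt f (P1ofB b) (P1ofB c) ↔ Bsq f b c := by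
  simp [P1lt]

@[simp] lemma not_P1lt_P1ofB_inl (b : Bt) (q : (ℕ → ℕ) × ℕ) :
    ¬ P1lt f (P1ofB b) (Sum.inl q) := by
  simp [P1lt]

@[simp] lemma not_P1lt_top_left (y : P1t) : ¬ P1lt f P1top y := by
  simp [P1lt]

@[simp] lemma P1lt_top_right (x : P1t) : P1lt f x P1top ↔ x ≠ P1top := by
  simp [P1lt]

lemma P1lt_irrefl (x : P1t) : ¬ P1lt f x x := by
  rcases P1t_cases x with ⟨g, n, rfl⟩ | ⟨b, rfl⟩ | rfl <;> simp [Bsq_irrefl]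

lemma P1lt_trans {x y z : P1t} (hxy : P1lt f x y) (hyz : P1lt f y z) : P1lt f x z := by
  rcases P1t_cases x with ⟨g, n, rfl⟩ | ⟨b, rfl⟩ | rfl <;>
  rcases P1t_cases y with ⟨g', n', rfl⟩ | ⟨b', rfl⟩ | rfl <;>
  rcases P1t_cases z with ⟨g'', n'', rfl⟩ | ⟨b'', rfl⟩ | rfl <;>
  simp only [P1lt_inl_inl, P1lt_inl_P1ofB, P1lt_P1ofB_P1ofB, not_P1lt_P1ofB_inl,
    not_P1lt_top_left, P1lt_top_right, ne_eq, inl_ne_top, P1ofB_ne_top, not_false_eq_true,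
    not_true_eq_false] at hxy hyz ⊢
  · exact ⟨hxy.1.trans hyz.1, hxy.2.trans hyz.2⟩
  · obtain ⟨rfl, hn⟩ := hxy
    obtain ⟨m, hm, rfl⟩ := hyz
    exact ⟨m, by omega, rfl⟩
  · obtain ⟨m, -, rfl⟩ := hxy
    exact absurd rfl hyz.src_ne_none
  · exact Bsq_trans hxy hyz

lemma P1le_top (x : P1t) : P1le f x P1top := by
  by_cases hx : x = P1top
  exacts [.inl hx, .inr ((P1lt_top_right x).2 hx)]

lemma P1le_trans {x y z : P1t} (hxy : P1le f x y) (hyz : P1le f y z) : P1le f x z := by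
  rcases hxy with rfl | hxy
  · exact hyz
  rcases hyz with rfl | hyz
  exacts [.inr hxy, .inr (P1lt_trans hxy hyz)]

lemma isPartialOrder_P1le : IsPartialOrder P1t (P1le f) where
  refl _ := .inl rfl
  trans _ _ _ := P1le_trans
  antisymm x y hxy hyx := by
    rcases hxy with rfl | hxy
    · rfl
    rcases hyx with rfl | hyx
    exacts [rfl, absurd (P1lt_trans hxy hyx) (P1lt_irrefl x)]

@[simp] lemma P1le_inl_inl {g g' : ℕ → ℕ} {n m : ℕ} :
    P1le f (Sum.inl (g, n)) (Sum.inl (g', m)) ↔ g = g' ∧ n ≤ m := by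
  simp only [P1le, P1lt_inl_inl, Sum.inl.injEq, Prod.mk.injEq, le_iff_eq_or_lt]
  grind

@[simp] lemma P1le_inl_P1ofB {g : ℕ → ℕ} {n : ℕ} {b : Bt} :
    P1le f (Sum.inl (g, n)) (P1ofB b) ↔ ∃ m, n ≤ m ∧ b = (g m, m, none) := by
  simp [P1le]

@[simp] lemma P1le_P1ofB_P1ofB {b c : Bt} : P1le f (P1ofB b) (P1ofB c) ↔ Ble f b c := by
  simp [P1le, Ble]

@[simp] lemma not_P1le_P1ofB_inl (b : Bt) (q : (ℕ → ℕ) × ℕ) :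
    ¬ P1le f (P1ofB b) (Sum.inl q) := by
  simp [P1le]

lemma P1le_inl_right {x : P1t} {g : ℕ → ℕ} {k : ℕ} (h : P1le f x (Sum.inl (g, k))) :
    ∃ k' ≤ k, x = Sum.inl (g, k') := by
  rcases P1t_cases x with ⟨g', k', rfl⟩ | ⟨b, rfl⟩ | rfl
  · obtain ⟨rfl, hk⟩ := P1le_inl_inl.1 h
    exact ⟨k', hk, rfl⟩
  · exact absurd h (not_P1le_P1ofB_inl _ _)
  · rcases h with h | h
    exacts [absurd h (top_ne_inl _), absurd h (not_P1lt_top_left _)]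

variable {D : Set P1t}

lemma eq_chain_of_not_cofinal_P1ofB (hD : DirectedOn' (P1le f) D)
    (hng : ¬ ∃ m ∈ D, ∀ x ∈ D, P1le f x m) {x₀ : P1t} (hx₀ : x₀ ∈ D)
    (hx₀B : ∀ y ∈ D, (∃ b : Bt, y = P1ofB b) → ¬ P1le f x₀ y) :
    ∃ (g : ℕ → ℕ) (N : Set ℕ), N.Infinite ∧ D = {x : P1t | ∃ n ∈ N, x = Sum.inl (g, n)} := by
  have htop : P1top ∉ D := fun h => hng ⟨P1top, h, fun x _ => P1le_top x⟩
  obtain ⟨g, n₀, rfl⟩ : ∃ g n₀, x₀ = Sum.inl (g, n₀) := by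
    rcases P1t_cases x₀ with h | ⟨b, rfl⟩ | rfl
    exacts [h, absurd (.inl rfl) (hx₀B _ hx₀ ⟨b, rfl⟩), absurd hx₀ htop]
  have hchain : ∀ x ∈ D, ∃ k, x = Sum.inl (g, k) := by
    intro x hx
    obtain ⟨z, hz, hxz, hx₀z⟩ := hD.2 x hx _ hx₀
    rcases P1t_cases z with ⟨g', k, rfl⟩ | ⟨b, rfl⟩ | rfl
    · obtain ⟨rfl, -⟩ := P1le_inl_inl.1 hx₀z
      obtain ⟨k', -, rfl⟩ := P1le_inl_right hxz
      exact ⟨k', rfl⟩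
    exacts [absurd hx₀z (hx₀B _ hz ⟨b, rfl⟩), absurd hz htop]
  refine ⟨g, {k | Sum.inl (g, k) ∈ D}, fun hfin => hng ?_, ?_⟩
  · obtain ⟨k, hk, hgreatest⟩ :=
      BddAbove.exists_isGreatest_of_nonempty hfin.bddAbove ⟨n₀, hx₀⟩
    refine ⟨_, hk, fun x hx => ?_⟩
    obtain ⟨k', rfl⟩ := hchain x hx
    exact P1le_inl_inl.2 ⟨rfl, hgreatest hx⟩
  · ext x
    constructor
    · intro hx
      obtain ⟨k, rfl⟩ := hchain x hx
      exact ⟨k, hx, rfl⟩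
    · rintro ⟨k, hk, rfl⟩
      exact hk

lemma P1_directed_eq_chain_or_cofinal_P1ofB (hD : DirectedOn' (P1le f) D)
    (hng : ¬ ∃ m ∈ D, ∀ x ∈ D, P1le f x m) :
    (∃ (g : ℕ → ℕ) (N : Set ℕ), N.Infinite ∧
      D = {x : P1t | ∃ n ∈ N, x = Sum.inl (g, n)}) ∨
    (∀ x ∈ D, ∃ y ∈ D, (∃ b : Bt, y = P1ofB b) ∧ P1le f x y) := by
  refine or_iff_not_imp_right.2 fun hcof => ?_
  push Not at hcof
  obtain ⟨x₀, hx₀, hx₀B⟩ := hcof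
  exact eq_chain_of_not_cofinal_P1ofB hD hng hx₀ hx₀B

lemma isLub'_top_of_infinite {g : ℕ → ℕ} {N : Set ℕ} (hN : N.Infinite) :
    IsLub' (P1le f) {x : P1t | ∃ n ∈ N, x = Sum.inl (g, n)} P1top := by
  refine ⟨fun x _ => P1le_top x, fun v hv => ?_⟩
  rcases P1t_cases v with ⟨g', m, rfl⟩ | ⟨b, rfl⟩ | rfl
  · obtain ⟨n, hn, hmn⟩ := hN.exists_gt m
    exact absurd (P1le_inl_inl.1 (hv _ ⟨n, hn, rfl⟩)).2 hmn.not_ge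
  · obtain ⟨n, hn, hbn⟩ := hN.exists_gt b.2.1
    obtain ⟨m, hnm, rfl⟩ := P1le_inl_P1ofB.1 (hv _ ⟨n, hn, rfl⟩)
    exact absurd hnm hbn.not_ge
  · exact .inl rfl

lemma exists_isLub'_of_cofinal_P1ofB (hf : ∀ p, Function.Injective (f p))
    (hD : DirectedOn' (P1le f) D) (hng : ¬ ∃ m ∈ D, ∀ x ∈ D, P1le f x m)
    (hcof : ∀ x ∈ D, ∃ y ∈ D, (∃ b : Bt, y = P1ofB b) ∧ P1le f x y) :
    ∃ u, IsLub' (P1le f) D u := by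
  set DB : Set Bt := {b | P1ofB b ∈ D}
  have hDB : DirectedOn' (Ble f) DB := by
    refine ⟨?_, fun b hb c hc => ?_⟩
    · obtain ⟨x, hx⟩ := hD.1
      obtain ⟨_, hy, ⟨b, rfl⟩, -⟩ := hcof x hx
      exact ⟨b, hy⟩
    obtain ⟨z, hz, hbz, hcz⟩ := hD.2 _ hb _ hc
    obtain ⟨_, hy, ⟨d, rfl⟩, hzd⟩ := hcof z hz
    exact ⟨d, hy, P1le_P1ofB_P1ofB.1 (P1le_trans hbz hzd),
      P1le_P1ofB_P1ofB.1 (P1le_trans hcz hzd)⟩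
  have hle_of_DB : ∀ c, (∀ b ∈ DB, Ble f b c) → ∀ x ∈ D, P1le f x (P1ofB c) := by
    intro c hc x hx
    obtain ⟨_, hy, ⟨b, rfl⟩, hxb⟩ := hcof x hx
    exact P1le_trans hxb (P1le_P1ofB_P1ofB.2 (hc b hy))
  obtain ⟨s, hs⟩ := exists_upperBounds_eq_singleton hf hDB
    fun ⟨c, hc, hcgreatest⟩ => hng ⟨_, hc, hle_of_DB c hcgreatest⟩
  refine ⟨P1ofB s, hle_of_DB s ((hs s).2 rfl), fun v hv => ?_⟩
  rcases P1t_cases v with ⟨g, n, rfl⟩ | ⟨c, rfl⟩ | rfl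
  · obtain ⟨b, hb⟩ := hDB.1
    exact absurd (hv _ hb) (not_P1le_P1ofB_inl _ _)
  · rw [(hs c).1 fun b hb => P1le_P1ofB_P1ofB.1 (hv _ hb)]
    exact .inl rfl
  · exact P1le_top _

lemma isDcpoRel_P1le (hf : ∀ p, Function.Injective (f p)) : IsDcpoRel (P1le f) := by
  intro D hD
  by_cases hg : ∃ m ∈ D, ∀ x ∈ D, P1le f x m
  · obtain ⟨m, hm, hgreatest⟩ := hg
    exact ⟨m, hgreatest, fun v hv => hv m hm⟩
  rcases P1_directed_eq_chain_or_cofinal_P1ofB hD hg with ⟨g, N, hN, rfl⟩ | hcof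
  exacts [⟨P1top, isLub'_top_of_infinite hN⟩, exists_isLub'_of_cofinal_P1ofB hf hD hg hcof]

end P1

/-- The poset `P₁ = (ℕ^ℕ × ℕ) ∪ B ∪ {⊤₁}` is a dcpo; moreover, every directed
subset of `P₁` without a greatest element either is of the form `{(f₀, n) : n ∈ N}` for a
fixed `f₀ ∈ ℕ^ℕ` and an infinite `N ⊆ ℕ`, or is cofinally contained in `B`. -/
theorem P1_isDcpo_and_directed_form (i : Pairt → Set ℕ) (f : Pairt → NWord → ℕ)
    (hif : IFData i f) :
    IsPartialOrder P1t (P1le f) ∧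
    IsDcpoRel (P1le f) ∧
    ∀ D : Set P1t, DirectedOn' (P1le f) D → (¬ ∃ m ∈ D, ∀ x ∈ D, P1le f x m) →
      (∃ (f₀ : ℕ → ℕ) (N : Set ℕ), N.Infinite ∧
        D = {x : P1t | ∃ n ∈ N, x = Sum.inl (f₀, n)}) ∨
      (∀ x ∈ D, ∃ y ∈ D, (∃ b : Bt, y = P1ofB b) ∧ P1le f x y) :=
  ⟨isPartialOrder_P1le, isDcpoRel_P1le hif.finj,
    fun _ hD hng => P1_directed_eq_chain_or_cofinal_P1ofB hD hng⟩
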